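/- arXiv:2503.12158 — 3 statements merged into one kernel-verified Lean document; each statement's English description precedes it below -/
import Mathlib

section
/- The function g is continuously differentiable on ℝ, satisfies |g(y)| ≤ 1 for all y ∈ ℝ, and its derivative is given by g'(y) = 0 for y < 0, g'(y) = −(ℓ+1)·sin((ℓ+1)(y − t_{2ℓ})) for y ∈ [t_{2ℓ}, t_{2ℓ+1}) (ℓ ≥ 0), and g'(y) = −sin(y − t_{2ℓ+1} + π) for y ∈ [t_{2ℓ+1}, t_{2ℓ+2}) (ℓ ≥ 0). -/
open Real Set Filter Topology

/-- The partition points of Example 2.6: `t 0 = 0`,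
`t (2ℓ+1) = t (2ℓ) + π/(ℓ+1)`, `t (2ℓ+2) = t (2ℓ+1) + π`. -/
noncomputable def tseq : ℕ → ℝ
  | 0 => 0
  | k + 1 => tseq k + (if k % 2 = 0 then Real.pi / ((k / 2 + 1 : ℕ) : ℝ) else Real.pi)

lemma tseq_even_succ (l : ℕ) : tseq (2*l+1) = tseq (2*l) + π / ((l:ℝ)+1) := by
  rw [tseq]
  norm_num [Nat.mul_mod_right, Nat.mul_div_cancel_left]

lemma tseq_odd_succ (l : ℕ) : tseq (2*l+2) = tseq (2*l+1) + π := by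
  rw [show 2*l+2 = (2*l+1)+1 by ring, tseq]
  have h : (2*l+1) % 2 = 1 := by omega
  simp [h]

lemma tseq_lt_succ (k : ℕ) : tseq k < tseq (k+1) := by
  rw [tseq]
  have : (0:ℝ) < (if k % 2 = 0 then Real.pi / ((k / 2 + 1 : ℕ) : ℝ) else Real.pi) := by
    split
    · positivity
    · exact Real.pi_pos
  linarith

lemma tseq_mono : StrictMono tseq := strictMono_nat_of_lt_succ tseq_lt_succ

lemma tseq_ge (l : ℕ) : π * l ≤ tseq (2*l) := by
  induction l with
  | zero => simp [tseq]
  | succ n ih =>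
    have h1 := tseq_even_succ n
    have h2 := tseq_odd_succ n
    have : tseq (2*(n+1)) = tseq (2*n) + π/((n:ℝ)+1) + π := by
      rw [show 2*(n+1) = 2*n+2 by ring, h2, h1]
    rw [this]
    have hp : (0:ℝ) ≤ π/((n:ℝ)+1) := by positivity
    push_cast
    nlinarith

lemma tseq_cover {y : ℝ} (hy : 0 ≤ y) : ∃ k, tseq k ≤ y ∧ y < tseq (k+1) := by
  classical
  have hex : ∃ n, y < tseq (n+1) := by
    obtain ⟨l, hl⟩ := exists_nat_gt (y / π)
    refine ⟨2*l+1, ?_⟩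
    have h1 : π * ((l:ℝ)+1) ≤ tseq (2*(l+1)) := by have := tseq_ge (l+1); push_cast at this ⊢; linarith
    have h2 : y < π * (l+1) := by
      rw [div_lt_iff₀ Real.pi_pos] at hl
      push_cast
      nlinarith [Real.pi_pos]
    have : (2*(l+1)) = (2*l+1)+1 := by ring
    rw [this] at h1
    linarith
  refine ⟨Nat.find hex, ?_, Nat.find_spec hex⟩
  rcases Nat.eq_zero_or_pos (Nat.find hex) with h0 | h0
  · rw [h0]; simpa [tseq] using hy
  · obtain ⟨m, hm⟩ := Nat.exists_eq_succ_of_ne_zero h0.ne'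
    have := Nat.find_min hex (by omega : m < Nat.find hex)
    rw [hm]
    linarith [not_lt.mp this]

lemma local_deriv {g F : ℝ → ℝ} {a b x d : ℝ} (hx : x ∈ Set.Ioo a b)
    (hF : HasDerivAt F d x) (h : ∀ y ∈ Set.Ioo a b, g y = F y) : HasDerivAt g d x := by
  have he : g =ᶠ[𝓝 x] F := eventually_of_mem (Ioo_mem_nhds hx.1 hx.2) h
  exact he.hasDerivAt_iff.mpr hF

lemma glue_deriv {g F G : ℝ → ℝ} {a x b : ℝ} (hax : a < x) (hxb : x < b)
    (hF : HasDerivAt F 0 x) (hG : HasDerivAt G 0 x)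
    (hgF : ∀ y ∈ Set.Ico a x, g y = F y)
    (hgG : ∀ y ∈ Set.Ico x b, g y = G y)
    (hFG : F x = G x) : HasDerivAt g 0 x := by
  have hgx : g x = G x := hgG x ⟨le_rfl, hxb⟩
  have hR : HasDerivWithinAt g 0 (Set.Ici x) x := by
    have hmem : Set.Ico x b ∈ 𝓝[≥] x := Ico_mem_nhdsGE hxb
    exact (hG.hasDerivWithinAt).congr_of_eventuallyEq
      (eventually_of_mem hmem hgG) hgx
  have hL : HasDerivWithinAt g 0 (Set.Iic x) x := by
    have hmem : Set.Ioc a x ∈ 𝓝[≤] x := Ioc_mem_nhdsLE hax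
    refine (hF.hasDerivWithinAt).congr_of_eventuallyEq
      (eventually_of_mem hmem fun y hy => ?_) (hgx.trans hFG.symm)
    rcases eq_or_lt_of_le hy.2 with h | h
    · rw [h, hgx, hFG]
    · exact hgF y ⟨hy.1.le, h⟩
  have := hL.union hR
  rwa [Set.Iic_union_Ici, hasDerivWithinAt_univ] at this

lemma cont_congr {h F : ℝ → ℝ} {s : Set ℝ} {x : ℝ} (hs : s ∈ 𝓝 x)
    (hF : Continuous F) (he : ∀ y ∈ s, h y = F y) : ContinuousAt h x :=
  hF.continuousAt.congr ((Filter.eventuallyEq_of_mem hs he).symm)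

lemma glue_cont {h F G : ℝ → ℝ} {a x b : ℝ} (hax : a < x) (hxb : x < b)
    (hF : Continuous F) (hG : Continuous G)
    (h1 : ∀ y ∈ Set.Ioc a x, h y = F y) (h2 : ∀ y ∈ Set.Ico x b, h y = G y) :
    ContinuousAt h x := by
  have hR : ContinuousWithinAt h (Set.Ici x) x := by
    have hmem : Set.Ico x b ∈ 𝓝[≥] x := Ico_mem_nhdsGE hxb
    exact (hG.continuousAt.continuousWithinAt).congr_of_eventuallyEq
      (eventually_of_mem hmem h2) (h2 x ⟨le_rfl, hxb⟩)
  have hL : ContinuousWithinAt h (Set.Iic x) x := by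
    have hmem : Set.Ioc a x ∈ 𝓝[≤] x := Ioc_mem_nhdsLE hax
    exact (hF.continuousAt.continuousWithinAt).congr_of_eventuallyEq
      (eventually_of_mem hmem h1) (h1 x ⟨hax, le_rfl⟩)
  have := hL.union hR
  rwa [Set.Iic_union_Ici, continuousWithinAt_univ] at this

lemma arg_even (l : ℕ) : ((l:ℝ)+1) * (tseq (2*l+1) - tseq (2*l)) = π := by
  rw [tseq_even_succ]
  have : ((l:ℝ)+1) ≠ 0 := by positivity
  field_simp
  ring

lemma arg_odd (l : ℕ) : tseq (2*l+2) - tseq (2*l+1) + π = 2*π := by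
  rw [tseq_odd_succ]; ring

lemma Fe_hasDeriv (l : ℕ) (y : ℝ) :
    HasDerivAt (fun z => Real.cos (((l:ℝ)+1)*(z - tseq (2*l))))
      (-(((l:ℝ)+1) * Real.sin (((l:ℝ)+1)*(y - tseq (2*l))))) y := by
  have h1 : HasDerivAt (fun z : ℝ => ((l:ℝ)+1)*(z - tseq (2*l))) ((l:ℝ)+1) y := by
    simpa using ((hasDerivAt_id y).sub_const (tseq (2*l))).const_mul ((l:ℝ)+1)
  convert h1.cos using 1
  ring

lemma Fo_hasDeriv (t y : ℝ) :
    HasDerivAt (fun z => Real.cos (z - t + π)) (-Real.sin (y - t + π)) y := by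
  have h1 : HasDerivAt (fun z : ℝ => z - t + π) 1 y :=
    ((hasDerivAt_id y).sub_const t).add_const π
  simpa using h1.cos

/-- The function `g` of Example 2.6 is `C¹`, bounded by 1 in absolute value, and its
derivative is given by the stated piecewise formula. -/
theorem stmt_0 (g : ℝ → ℝ)
    (hneg : ∀ y : ℝ, y < 0 → g y = 1)
    (heven : ∀ (ℓ : ℕ), ∀ y ∈ Set.Ico (tseq (2 * ℓ)) (tseq (2 * ℓ + 1)),
      g y = Real.cos (((ℓ : ℝ) + 1) * (y - tseq (2 * ℓ))))
    (hodd : ∀ (ℓ : ℕ), ∀ y ∈ Set.Ico (tseq (2 * ℓ + 1)) (tseq (2 * ℓ + 2)),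
      g y = Real.cos (y - tseq (2 * ℓ + 1) + Real.pi)) :
    ContDiff ℝ 1 g ∧
    (∀ y : ℝ, |g y| ≤ 1) ∧
    (∀ y : ℝ, y < 0 → deriv g y = 0) ∧
    (∀ (ℓ : ℕ), ∀ y ∈ Set.Ico (tseq (2 * ℓ)) (tseq (2 * ℓ + 1)),
      deriv g y = -(((ℓ : ℝ) + 1) * Real.sin (((ℓ : ℝ) + 1) * (y - tseq (2 * ℓ))))) ∧
    (∀ (ℓ : ℕ), ∀ y ∈ Set.Ico (tseq (2 * ℓ + 1)) (tseq (2 * ℓ + 2)),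
      deriv g y = -Real.sin (y - tseq (2 * ℓ + 1) + Real.pi)) := by
  have t0 : tseq 0 = 0 := rfl
  -- derivative on negative reals
  have keyN : ∀ y : ℝ, y < 0 → HasDerivAt g 0 y := by
    intro y hy
    refine local_deriv (a := y - 1) (b := 0) ⟨by linarith, hy⟩ (hasDerivAt_const y 1)
      (fun z hz => hneg z hz.2)
  -- derivative on even intervals
  have keyE : ∀ l : ℕ, ∀ y ∈ Set.Ico (tseq (2*l)) (tseq (2*l+1)),
      HasDerivAt g (-(((l:ℝ)+1) * Real.sin (((l:ℝ)+1)*(y - tseq (2*l))))) y := by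
    intro l y hy
    rcases eq_or_lt_of_le hy.1 with hxe | hlt
    · -- junction point y = tseq (2*l)
      rw [← hxe]
      have hgoal : -(((l:ℝ)+1) * Real.sin (((l:ℝ)+1)*(tseq (2*l) - tseq (2*l)))) = 0 := by
        simp
      rw [hgoal]
      match l with
      | 0 =>
        refine glue_deriv (a := -1) (b := tseq 1)
          (G := fun z => Real.cos (((0:ℝ)+1)*(z - tseq (2*0))))
          (by rw [t0]; norm_num) (t0 ▸ tseq_lt_succ 0)
          (hasDerivAt_const _ (1:ℝ)) ?_ (fun z hz => hneg z (by rw [t0] at hz; exact hz.2)) ?_ ?_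
        · have := Fe_hasDeriv 0 (tseq 0)
          norm_num at this ⊢
          simpa using this
        · intro z hz
          have := heven 0 z (by norm_num; exact hz)
          norm_num at this ⊢
          exact this
        · norm_num
      | Nat.succ m =>
        have e1 : 2*(m+1) = 2*m+2 := by ring
        rw [e1]
        refine glue_deriv (a := tseq (2*m+1)) (b := tseq (2*m+2+1))
          (tseq_lt_succ (2*m+1)) (tseq_lt_succ (2*m+2))
          (F := fun z => Real.cos (z - tseq (2*m+1) + π))
          (G := fun z => Real.cos ((((m:ℝ)+1)+1)*(z - tseq (2*m+2)))) ?_ ?_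
          (fun z hz => hodd m z hz) ?_ ?_
        · have h := Fo_hasDeriv (tseq (2*m+1)) (tseq (2*m+2))
          rw [arg_odd] at h
          simpa [Real.sin_two_pi] using h
        · have h := Fe_hasDeriv (m+1) (tseq (2*m+2))
          rw [e1] at h
          simpa using h
        · intro z hz
          have := heven (m+1) z (by rw [e1]; exact hz)
          rw [e1] at this
          show g z = Real.cos ((((m:ℝ)+1)+1)*(z - tseq (2*m+2)))
          push_cast at this
          exact this
        · show Real.cos (tseq (2*m+2) - tseq (2*m+1) + π)
            = Real.cos ((((m:ℝ)+1)+1)*(tseq (2*m+2) - tseq (2*m+2)))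
          rw [arg_odd]
          norm_num
    · exact local_deriv ⟨hlt, hy.2⟩ (Fe_hasDeriv l y)
        (fun z hz => heven l z ⟨hz.1.le, hz.2⟩)
  -- derivative on odd intervals
  have keyO : ∀ l : ℕ, ∀ y ∈ Set.Ico (tseq (2*l+1)) (tseq (2*l+2)),
      HasDerivAt g (-Real.sin (y - tseq (2*l+1) + π)) y := by
    intro l y hy
    rcases eq_or_lt_of_le hy.1 with hxe | hlt
    · rw [← hxe]
      have hgoal : -Real.sin (tseq (2*l+1) - tseq (2*l+1) + π) = 0 := by
        simp
      rw [hgoal]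
      refine glue_deriv (a := tseq (2*l)) (b := tseq (2*l+2))
        (tseq_lt_succ (2*l)) (tseq_lt_succ (2*l+1))
        (F := fun z => Real.cos (((l:ℝ)+1)*(z - tseq (2*l)))) ?_ ?_
        (fun z hz => heven l z hz) (fun z hz => hodd l z hz) ?_
      · have h := Fe_hasDeriv l (tseq (2*l+1))
        rw [arg_even] at h
        simpa using h
      · have h := Fo_hasDeriv (tseq (2*l+1)) (tseq (2*l+1))
        simpa using h
      · show Real.cos (((l:ℝ)+1) * (tseq (2*l+1) - tseq (2*l))) = _
        rw [arg_even]
        norm_num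
    · exact local_deriv ⟨hlt, hy.2⟩ (Fo_hasDeriv (tseq (2*l+1)) y)
        (fun z hz => hodd l z ⟨hz.1.le, hz.2⟩)
  -- zero derivative at even junctions
  have derivE0 : ∀ m : ℕ, deriv g (tseq (2*m)) = 0 := by
    intro m
    have := (keyE m (tseq (2*m)) ⟨le_rfl, tseq_lt_succ _⟩).deriv
    simpa using this
  have derivO0 : ∀ m : ℕ, deriv g (tseq (2*m+1)) = 0 := by
    intro m
    have := (keyO m (tseq (2*m+1)) ⟨le_rfl, tseq_lt_succ _⟩).deriv
    simpa using this
  have hbound : ∀ y : ℝ, |g y| ≤ 1 := by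
    intro y
    rcases lt_or_ge y 0 with h | h
    · rw [hneg y h]; norm_num
    · obtain ⟨k, hk1, hk2⟩ := tseq_cover h
      rcases Nat.even_or_odd k with ⟨m, hm⟩ | ⟨m, hm⟩
      · have e : k = 2*m := by omega
        subst e
        rw [heven m y ⟨hk1, hk2⟩]
        exact Real.abs_cos_le_one _
      · have e : k = 2*m+1 := by omega
        subst e
        rw [hodd m y ⟨hk1, hk2⟩]
        exact Real.abs_cos_le_one _
  have hdiff : Differentiable ℝ g := by
    intro y
    rcases lt_or_ge y 0 with h | h
    · exact (keyN y h).differentiableAt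
    · obtain ⟨k, hk1, hk2⟩ := tseq_cover h
      rcases Nat.even_or_odd k with ⟨m, hm⟩ | ⟨m, hm⟩
      · have e : k = 2*m := by omega
        subst e
        exact (keyE m y ⟨hk1, hk2⟩).differentiableAt
      · have e : k = 2*m+1 := by omega
        subst e
        exact (keyO m y ⟨hk1, hk2⟩).differentiableAt
  have hcont : Continuous (deriv g) := by
    rw [continuous_iff_continuousAt]
    intro y
    rcases lt_or_ge y 0 with h | h
    · exact cont_congr (Iio_mem_nhds h) continuous_const (fun z hz => (keyN z hz).deriv)
    · obtain ⟨k, hk1, hk2⟩ := tseq_cover h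
      rcases Nat.even_or_odd k with ⟨m, hm⟩ | ⟨m, hm⟩
      · have e : k = 2*m := by omega
        subst e
        rcases eq_or_lt_of_le hk1 with hxe | hlt
        · rw [← hxe]
          match m with
          | 0 =>
            refine glue_cont (a := -1) (b := tseq 1)
              (F := fun _ => (0:ℝ))
              (G := fun z => -(((0:ℕ):ℝ)+1) * Real.sin ((((0:ℕ):ℝ)+1)*(z - tseq (2*0))))
              (by rw [t0]; norm_num) (t0 ▸ tseq_lt_succ 0)
              continuous_const (by fun_prop) ?_ ?_
            · intro z hz
              rcases eq_or_lt_of_le hz.2 with hze | hzl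
              · rw [hze]; exact derivE0 0
              · rw [t0] at hzl
                exact (keyN z hzl).deriv
            · intro z hz
              have := (keyE 0 z (by norm_num; exact hz)).deriv
              norm_num at this ⊢
              exact this
          | Nat.succ n =>
            have e1 : 2*(n+1) = 2*n+2 := by ring
            rw [e1]
            refine glue_cont (a := tseq (2*n+1)) (b := tseq (2*n+2+1))
              (F := fun z => -Real.sin (z - tseq (2*n+1) + π))
              (G := fun z => -((((n:ℝ)+1)+1) * Real.sin ((((n:ℝ)+1)+1)*(z - tseq (2*n+2)))))
              (tseq_lt_succ (2*n+1)) (tseq_lt_succ (2*n+2))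
              (by fun_prop) (by fun_prop) ?_ ?_
            · intro z hz
              rcases eq_or_lt_of_le hz.2 with hze | hzl
              · rw [hze]
                have h1 : deriv g (tseq (2*n+2)) = 0 := by
                  have := derivE0 (n+1); rwa [e1] at this
                rw [h1]
                show (0:ℝ) = -Real.sin (tseq (2*n+2) - tseq (2*n+1) + π)
                rw [arg_odd]
                simp [Real.sin_two_pi]
              · exact (keyO n z ⟨hz.1.le, hzl⟩).deriv
            · intro z hz
              have := (keyE (n+1) z (by rw [e1]; exact hz)).deriv
              rw [e1] at this
              show deriv g z = -((((n:ℝ)+1)+1) * Real.sin ((((n:ℝ)+1)+1)*(z - tseq (2*n+2))))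
              push_cast at this
              exact this
        · refine cont_congr (Ioo_mem_nhds hlt hk2)
            (F := fun z => -(((m:ℝ)+1) * Real.sin (((m:ℝ)+1)*(z - tseq (2*m)))))
            (by fun_prop) ?_
          intro z hz
          exact (keyE m z ⟨hz.1.le, hz.2⟩).deriv
      · have e : k = 2*m+1 := by omega
        subst e
        rcases eq_or_lt_of_le hk1 with hxe | hlt
        · rw [← hxe]
          refine glue_cont (a := tseq (2*m)) (b := tseq (2*m+2))
            (F := fun z => -(((m:ℝ)+1) * Real.sin (((m:ℝ)+1)*(z - tseq (2*m)))))
            (G := fun z => -Real.sin (z - tseq (2*m+1) + π))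
            (tseq_lt_succ (2*m)) (tseq_lt_succ (2*m+1))
            (by fun_prop) (by fun_prop) ?_ ?_
          · intro z hz
            rcases eq_or_lt_of_le hz.2 with hze | hzl
            · rw [hze, derivO0 m]
              show (0:ℝ) = -(((m:ℝ)+1) * Real.sin (((m:ℝ)+1)*(tseq (2*m+1) - tseq (2*m))))
              rw [arg_even]
              simp
            · exact (keyE m z ⟨hz.1.le, hzl⟩).deriv
          · intro z hz
            exact (keyO m z hz).deriv
        · refine cont_congr (Ioo_mem_nhds hlt hk2)
            (F := fun z => -Real.sin (z - tseq (2*m+1) + π))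
            (by fun_prop) ?_
          intro z hz
          exact (keyO m z ⟨hz.1.le, hz.2⟩).deriv
  exact ⟨contDiff_one_iff_deriv.mpr ⟨hdiff, hcont⟩, hbound,
    fun y hy => (keyN y hy).deriv,
    fun l y hy => (keyE l y hy).deriv,
    fun l y hy => (keyO l y hy).deriv⟩
end

section
/- For every ℓ ≥ 0 there exists y_ℓ ∈ (t_{2ℓ}, t_{2ℓ+1}) such that g'(y_ℓ) = −(ℓ+1); consequently g is not Lipschitz continuous, i.e. there is no constant L ≥ 0 such that |g(y) − g(y')| ≤ L|y − y'| for all y, y' ∈ ℝ. -/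
open Real

lemma tseq_odd (ℓ : ℕ) : tseq (2 * ℓ + 1) = tseq (2 * ℓ) + Real.pi / ((ℓ : ℝ) + 1) := by
  show tseq (2 * ℓ) + _ = _
  have h1 : (2 * ℓ) % 2 = 0 := by omega
  have h2 : (2 * ℓ) / 2 = ℓ := by omega
  rw [h1, h2]
  simp

/-- For the function `g` of Example 2.6: for every `ℓ` there is `y_ℓ ∈ (t_{2ℓ}, t_{2ℓ+1})`
with `g'(y_ℓ) = -(ℓ+1)`; consequently `g` is not Lipschitz continuous. -/
theorem stmt_5 (g : ℝ → ℝ)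
    (hneg : ∀ y : ℝ, y < 0 → g y = 1)
    (heven : ∀ (ℓ : ℕ), ∀ y ∈ Set.Ico (tseq (2 * ℓ)) (tseq (2 * ℓ + 1)),
      g y = Real.cos (((ℓ : ℝ) + 1) * (y - tseq (2 * ℓ))))
    (hodd : ∀ (ℓ : ℕ), ∀ y ∈ Set.Ico (tseq (2 * ℓ + 1)) (tseq (2 * ℓ + 2)),
      g y = Real.cos (y - tseq (2 * ℓ + 1) + Real.pi)) :
    (∀ ℓ : ℕ, ∃ y ∈ Set.Ioo (tseq (2 * ℓ)) (tseq (2 * ℓ + 1)),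
      deriv g y = -((ℓ : ℝ) + 1)) ∧
    ¬ ∃ L : ℝ, 0 ≤ L ∧ ∀ y y' : ℝ, |g y - g y'| ≤ L * |y - y'| := by
  have hpi := Real.pi_pos
  -- basic facts
  have hc : ∀ ℓ : ℕ, (0 : ℝ) < (ℓ : ℝ) + 1 := fun ℓ => by positivity
  have hmid : ∀ ℓ : ℕ,
      tseq (2 * ℓ) + Real.pi / (2 * ((ℓ : ℝ) + 1)) ∈
        Set.Ioo (tseq (2 * ℓ)) (tseq (2 * ℓ + 1)) := by
    intro ℓ
    have h1 : (0 : ℝ) < Real.pi / (2 * ((ℓ : ℝ) + 1)) := by positivity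
    have h2 : Real.pi / (2 * ((ℓ : ℝ) + 1)) < Real.pi / ((ℓ : ℝ) + 1) := by
      apply div_lt_div_of_pos_left hpi (hc ℓ)
      nlinarith [hc ℓ]
    constructor
    · linarith
    · rw [tseq_odd]; linarith
  constructor
  · intro ℓ
    set a := tseq (2 * ℓ)
    set c : ℝ := (ℓ : ℝ) + 1
    refine ⟨a + Real.pi / (2 * c), hmid ℓ, ?_⟩
    set y₀ := a + Real.pi / (2 * c)
    have hyarg : c * (y₀ - a) = Real.pi / 2 := by
      rw [show y₀ - a = Real.pi / (2 * c) by simp [y₀], mul_div_assoc',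
        div_eq_div_iff (by positivity) (by norm_num)]
      ring
    have hEq : g =ᶠ[nhds y₀] fun y => Real.cos (c * (y - a)) := by
      have hopen : Set.Ioo a (tseq (2 * ℓ + 1)) ∈ nhds y₀ :=
        (isOpen_Ioo).mem_nhds (hmid ℓ)
      filter_upwards [hopen] with y hy
      exact heven ℓ y ⟨le_of_lt hy.1, hy.2⟩
    rw [hEq.deriv_eq]
    have hd : HasDerivAt (fun y => Real.cos (c * (y - a)))
        (-Real.sin (c * (y₀ - a)) * c) y₀ := by
      have h1 : HasDerivAt (fun y : ℝ => c * (y - a)) c y₀ := by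
        simpa using ((hasDerivAt_id y₀).sub_const a).const_mul c
      exact (Real.hasDerivAt_cos (c * (y₀ - a))).comp y₀ h1
    rw [hd.deriv, hyarg, Real.sin_pi_div_two]
    ring
  · rintro ⟨L, hL0, hL⟩
    obtain ⟨n, hn⟩ := exists_nat_gt (L * Real.pi / 2)
    set a := tseq (2 * n)
    set c : ℝ := (n : ℝ) + 1
    set y₀ := a + Real.pi / (2 * c)
    have hmem := hmid n
    have hga : g a = 1 := by
      have : a ∈ Set.Ico a (tseq (2 * n + 1)) := ⟨le_refl _, (hmem.1).trans hmem.2⟩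
      rw [heven n a this]; simp [a]
    have hgy : g y₀ = 0 := by
      have : y₀ ∈ Set.Ico a (tseq (2 * n + 1)) := ⟨le_of_lt hmem.1, hmem.2⟩
      rw [heven n y₀ this]
      have : c * (y₀ - a) = Real.pi / 2 := by
        rw [show y₀ - a = Real.pi / (2 * c) by simp [y₀], mul_div_assoc',
          div_eq_div_iff (by positivity) (by norm_num)]; ring
      rw [this, Real.cos_pi_div_two]
    have h := hL a y₀
    rw [hga, hgy] at h
    have habs : |a - y₀| = Real.pi / (2 * c) := by
      have h1 : (0 : ℝ) < Real.pi / (2 * c) := by positivity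
      rw [abs_sub_comm]
      have : y₀ - a = Real.pi / (2 * c) := by simp [y₀]
      rw [this, abs_of_pos h1]
    rw [habs] at h
    simp only [sub_zero, abs_one] at h
    have hc' : (0 : ℝ) < 2 * c := by positivity
    have h' : 1 ≤ L * Real.pi / (2 * c) := by rw [mul_div_assoc]; exact h
    rw [le_div_iff₀ hc', one_mul] at h'
    have : ((n : ℝ)) ≤ c := by simp [c]
    nlinarith
end

section
/- The function l is continuous, takes values in [−1, 0], satisfies the one-sided (monotonicity) condition (l(y) − l(y'))(y − y') ≤ (y − y')² for all y, y' ∈ ℝ, and l is not Lipschitz continuous, i.e. there is no constant L ≥ 0 such that |l(y) − l(y')| ≤ L|y − y'| for all y, y' ∈ ℝ. -/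
/-!
For `y ≤ 1` the function is `-√y` (as `√y = 0` for `y ≤ 0`) and for `y ≥ 1` it is `-e^{1-y}`, so it
equals `-min (√y) (e^{1-y})`; continuity and the bounds are immediate from this form. The one-sided
condition says exactly that `y ↦ y - l y` is monotone, which holds on `(-∞, 1]` because `√` is
monotone and on `[1, ∞)` because `e^{1-y}` decreases with slope at most `1` there. Lipschitz
continuity fails at `0`, where `√y / y` is unbounded.
-/

open Real Set

noncomputable def ell (y : ℝ) : ℝ := -min (√y) (exp (1 - y))

lemma ell_of_le_one {y : ℝ} (hy : y ≤ 1) : ell y = -√y := by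
  rw [ell, min_eq_left ((sqrt_le_one.mpr hy).trans (one_le_exp (by linarith)))]

lemma ell_of_one_le {y : ℝ} (hy : 1 ≤ y) : ell y = -exp (1 - y) := by
  rw [ell, min_eq_right ((exp_le_one_iff.mpr (by linarith)).trans (one_le_sqrt.mpr hy))]

lemma eq_ell {l : ℝ → ℝ}
    (h0 : ∀ y : ℝ, y ≤ 0 → l y = 0)
    (h1 : ∀ y : ℝ, 0 < y → y ≤ 1 → l y = -Real.sqrt y)
    (h2 : ∀ y : ℝ, 1 < y → l y = -Real.exp (1 - y)) : l = ell := by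
  funext y
  rcases le_or_gt y 0 with hy | hy
  · rw [h0 y hy, ell_of_le_one (by linarith), sqrt_eq_zero'.mpr hy, neg_zero]
  rcases le_or_gt y 1 with hy1 | hy1
  · rw [h1 y hy hy1, ell_of_le_one hy1]
  · rw [h2 y hy1, ell_of_one_le hy1.le]

lemma continuous_ell : Continuous ell := by
  unfold ell; fun_prop

lemma ell_mem_Icc (y : ℝ) : ell y ∈ Icc (-1) 0 := by
  rcases le_total y 1 with hy | hy
  · rw [ell_of_le_one hy]
    exact ⟨neg_le_neg (sqrt_le_one.mpr hy), neg_nonpos.mpr (sqrt_nonneg y)⟩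
  · rw [ell_of_one_le hy]
    exact ⟨neg_le_neg (exp_le_one_iff.mpr (by linarith)), neg_nonpos.mpr (exp_pos _).le⟩

lemma monotoneOn_add_exp_one_sub : MonotoneOn (fun y => y + exp (1 - y)) (Ici 1) := by
  intro a ha b hb hab
  have h1 : exp (1 - a) ≤ 1 := exp_le_one_iff.mpr (by linarith [mem_Ici.mp ha])
  have h2 : 1 - (b - a) ≤ exp (a - b) := by linarith [add_one_le_exp (a - b)]
  have h3 : exp (1 - b) = exp (1 - a) * exp (a - b) := by rw [← exp_add]; ring_nf
  have h4 : exp (a - b) ≤ 1 := exp_le_one_iff.mpr (by linarith)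
  -- `e^{1-a} - e^{1-b} = e^{1-a} (1 - e^{a-b}) ≤ 1 · (b - a)`
  nlinarith [exp_pos (1 - a)]

lemma monotone_sub_ell : Monotone fun y => y - ell y := by
  refine MonotoneOn.Iic_union_Ici (a := 1) ?_ ?_
  · intro a ha b hb hab
    simp only [ell_of_le_one ha, ell_of_le_one hb, sub_neg_eq_add]
    exact add_le_add hab (sqrt_le_sqrt hab)
  · intro a ha b hb hab
    simp only [ell_of_one_le ha, ell_of_one_le hb, sub_neg_eq_add]
    exact monotoneOn_add_exp_one_sub ha hb hab

lemma one_sided_of_monotone_sub {f : ℝ → ℝ} (hf : Monotone fun y => y - f y) (y y' : ℝ) :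
    (f y - f y') * (y - y') ≤ (y - y') ^ 2 := by
  suffices 0 ≤ ((y - f y) - (y' - f y')) * (y - y') by nlinarith
  rcases le_total y' y with h | h
  · exact mul_nonneg (sub_nonneg.mpr (hf h)) (sub_nonneg.mpr h)
  · exact mul_nonneg_of_nonpos_of_nonpos (sub_nonpos.mpr (hf h)) (sub_nonpos.mpr h)

lemma exists_mul_lt_sqrt (L : ℝ) (hL : 0 ≤ L) : ∃ y ∈ Icc 0 1, L * y < √y := by
  set a := (L + 1)⁻¹
  have ha : 0 < a := by positivity
  have haL : a * (L + 1) = 1 := inv_mul_cancel₀ (by positivity)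
  refine ⟨a ^ 2, ⟨by positivity, by nlinarith⟩, ?_⟩
  rw [sqrt_sq ha.le]; nlinarith

/-- The function `l` of Example 2.7 (`l(y) = 0` for `y ≤ 0`, `-√y` for `0 < y ≤ 1`,
`-e^{1-y}` for `y > 1`) is continuous, takes values in `[-1, 0]`, satisfies the
one-sided monotonicity condition, and is not Lipschitz continuous. -/
theorem stmt_7 (l : ℝ → ℝ)
    (h0 : ∀ y : ℝ, y ≤ 0 → l y = 0)
    (h1 : ∀ y : ℝ, 0 < y → y ≤ 1 → l y = -Real.sqrt y)
    (h2 : ∀ y : ℝ, 1 < y → l y = -Real.exp (1 - y)) :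
    Continuous l ∧
    (∀ y : ℝ, l y ∈ Set.Icc (-1 : ℝ) 0) ∧
    (∀ y y' : ℝ, (l y - l y') * (y - y') ≤ (y - y') ^ 2) ∧
    ¬ ∃ L : ℝ, 0 ≤ L ∧ ∀ y y' : ℝ, |l y - l y'| ≤ L * |y - y'| := by
  obtain rfl := eq_ell h0 h1 h2
  refine ⟨continuous_ell, ell_mem_Icc, one_sided_of_monotone_sub monotone_sub_ell, ?_⟩
  rintro ⟨L, hL, hlip⟩
  obtain ⟨y, ⟨hy0, hy1⟩, hy⟩ := exists_mul_lt_sqrt L hL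
  have := hlip y 0
  rw [h0 0 le_rfl, ell_of_le_one hy1, sub_zero, sub_zero,
    abs_neg, abs_of_nonneg hy0, abs_of_nonneg (sqrt_nonneg y)] at this
  linarith
end
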